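/- Irrelevance of variables, program part (Lemma 1(2) of the paper): let π be a DL-PA∥ program, P ⊆ ℙ with vars(π) ⊆ P, and let M₁, M₁' be models with M₁∩P = M₁'∩P. If M₁⟦π⟧M₂ then M₁'⟦π⟧M₂', where M₂' is the unique model with M₂'∩P = M₂∩P and M₂'∩(ℙ∖P) = M₁'∩(ℙ∖P). -/

import Mathlib

set_option maxHeartbeats 1000000

/-- Propositional variables. -/
abbrev PVar := ℕ

/-- A DL-PA∥ model: readable variables `R`, writable variables `W`,
valuation `V`, with writability implying readability. -/
@[ext]
structure Model where
  R : Set PVar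
  W : Set PVar
  V : Set PVar
  sub : W ⊆ R

mutual
/-- Formulas of DL-PA∥. -/
inductive Formula : Type where
  | atom : PVar → Formula
  | top  : Formula
  | neg  : Formula → Formula
  | or   : Formula → Formula → Formula
  | dia  : Program → Formula → Formula
/-- Programs of DL-PA∥. -/
inductive Program : Type where
  | assignT : PVar → Program   -- +p
  | assignF : PVar → Program   -- −p
  | addR : PVar → Program      -- +r p
  | remR : PVar → Program      -- −r p
  | addW : PVar → Program      -- +w p
  | remW : PVar → Program      -- −w p
  | testEx : Formula → Program -- exogenous test φ?
  | testEn : Formula → Program -- endogenous test φ?ⁿ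
  | seq : Program → Program → Program
  | choice : Program → Program → Program
  | star : Program → Program
  | par : Program → Program → Program
end

/-- RW-disjointness. -/
def RWdisjoint (M1 M2 : Model) : Prop :=
  M1.W ∩ M2.R = ∅ ∧ M2.W ∩ M1.R = ∅

/-- Split relation `M ◁ (M₁,M₂)`. -/
def SplitRel (M M1 M2 : Model) : Prop :=
  RWdisjoint M1 M2 ∧ M.R = M1.R ∪ M2.R ∧ M.W = M1.W ∪ M2.W ∧ M.V = M1.V ∧ M.V = M2.V

/-- Merge relation `M ▷ (M₁,M₂)`. -/
def MergeRel (M M1 M2 : Model) : Prop :=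
  RWdisjoint M1 M2 ∧ M.R = M1.R ∪ M2.R ∧ M.W = M1.W ∪ M2.W ∧
  M1.V \ M.W = M2.V \ M.W ∧ M.V = (M1.V ∩ M1.W) ∪ (M2.V ∩ M2.W) ∪ (M1.V ∩ M2.V)

/-- Indistinguishability `M ∼ M'`. -/
def Indist (M M' : Model) : Prop :=
  M.R = M'.R ∧ M.W = M'.W ∧ M.V ∩ M.R = M'.V ∩ M'.R

mutual
/-- Truth of a formula in a model. -/
def Sat : Model → Formula → Prop
  | M, .atom p => p ∈ M.V
  | _, .top => True
  | M, .neg φ => ¬ Sat M φ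
  | M, .or φ ψ => Sat M φ ∨ Sat M ψ
  | M, .dia π φ => ∃ M', Interp π M M' ∧ Sat M' φ
/-- Interpretation of programs as relations between models. -/
def Interp : Program → Model → Model → Prop
  | .assignT p, M, M' => M'.R = M.R ∧ M'.W = M.W ∧ M'.V = M.V ∪ {p} ∧ p ∈ M.W
  | .assignF p, M, M' => M'.R = M.R ∧ M'.W = M.W ∧ M'.V = M.V \ {p} ∧ p ∈ M.W
  | .addR p, M, M' => M'.R = M.R ∪ {p} ∧ M'.W = M.W ∧ M'.V = M.V
  | .remR p, M, M' => M'.R = M.R \ {p} ∧ M'.W = M.W \ {p} ∧ M'.V = M.V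
  | .addW p, M, M' => M'.R = M.R ∪ {p} ∧ M'.W = M.W ∪ {p} ∧ M'.V = M.V
  | .remW p, M, M' => M'.R = M.R ∧ M'.W = M.W \ {p} ∧ M'.V = M.V
  | .testEx φ, M, M' => M = M' ∧ Sat M φ
  | .testEn φ, M, M' => M = M' ∧ ∀ M'', Indist M'' M → Sat M'' φ
  | .seq π1 π2, M, M' => ∃ M'', Interp π1 M M'' ∧ Interp π2 M'' M'
  | .choice π1 π2, M, M' => Interp π1 M M' ∨ Interp π2 M M'
  | .star π, M, M' => Relation.ReflTransGen (fun A B => Interp π A B) M M'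
  | .par π1 π2, M, M' => ∃ M1 M2 M1' M2',
      SplitRel M M1 M2 ∧ MergeRel M' M1' M2' ∧
      Interp π1 M1 M1' ∧ Interp π2 M2 M2' ∧
      M1.R = M1'.R ∧ M1.W = M1'.W ∧ M1.V \ M1.W = M1'.V \ M1'.W ∧
      M2.R = M2'.R ∧ M2.W = M2'.W ∧ M2.V \ M2.W = M2'.V \ M2'.W
end

mutual
/-- Propositional variables occurring in a formula. -/
def varsF : Formula → Finset PVar
  | .atom p => {p}
  | .top => ∅
  | .neg φ => varsF φ
  | .or φ ψ => varsF φ ∪ varsF ψ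
  | .dia π φ => varsP π ∪ varsF φ
/-- Propositional variables occurring in a program. -/
def varsP : Program → Finset PVar
  | .assignT p => {p}
  | .assignF p => {p}
  | .addR p => {p}
  | .remR p => {p}
  | .addW p => {p}
  | .remW p => {p}
  | .testEx φ => varsF φ
  | .testEn φ => varsF φ
  | .seq π1 π2 => varsP π1 ∪ varsP π2
  | .choice π1 π2 => varsP π1 ∪ varsP π2
  | .star π => varsP π
  | .par π1 π2 => varsP π1 ∪ varsP π2
end

/-- `⊥`. -/
def botF : Formula := .neg .top
/-- Conjunction. -/
def andF (φ ψ : Formula) : Formula := .neg (.or (.neg φ) (.neg ψ))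
/-- Implication. -/
def impF (φ ψ : Formula) : Formula := .or (.neg φ) ψ
/-- Bi-implication. -/
def iffF (φ ψ : Formula) : Formula := andF (impF φ ψ) (impF ψ φ)
/-- `[π]φ`. -/
def boxF (π : Program) (φ : Formula) : Formula := .neg (.dia π (.neg φ))
/-- `w(p)`: `p` is writable. -/
def wF (p : PVar) : Formula := .dia (.assignT p) .top
/-- `r(p)`: `p` is readable. -/
def rF (p : PVar) : Formula :=
  .or (.dia (.testEn (.atom p)) .top) (.dia (.testEn (.neg (.atom p))) .top)

/-- Restriction `M ∩ P` of a model to a set of variables. -/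
def interModel (M : Model) (P : Set PVar) : Model :=
  ⟨M.R ∩ P, M.W ∩ P, M.V ∩ P, Set.inter_subset_inter M.sub (subset_refl P)⟩

/-- A formula is valid iff true in every model. -/
def Valid (φ : Formula) : Prop := ∀ M : Model, Sat M φ

/-! Write `A.patch P B` for the model that agrees with `A` on `P` and with `B` off `P`; the
model `M₂'` of the theorem is `M₂.patch P M₁'`, and `M₁' = M₁.patch P M₁'`. The split and merge
relations, indistinguishability and the frame conditions of `∥` are componentwise Boolean
identities, so they commute with patching, and an atomic program on `p ∈ P` leaves everything
off `P` alone. Hence, by simultaneous induction, `M⟦π⟧N` implies `M.patch P C ⟦π⟧ N.patch P C`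
for every `C` whenever `vars(π) ⊆ P`, and the truth of a formula over `P` depends only on `M ∩ P`.
For `∥` the frame `C` is split as `(C, C.idle)`, where `C.idle` reads and writes nothing; for an
endogenous test, a model indistinguishable from `M.patch P C` is patched back with `M`. -/

namespace Set

variable {α : Type*} {t s s' s₁ s₂ : Set α} {a x : α}

theorem mem_ite_of_mem (hx : x ∈ t) : x ∈ t.ite s s' ↔ x ∈ s := by
  simp [Set.ite, hx]

theorem mem_ite_of_notMem (hx : x ∉ t) : x ∈ t.ite s s' ↔ x ∈ s' := by
  simp [Set.ite, hx]

theorem ite_union_union (t s₁ s₂ s₁' s₂' : Set α) :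
    t.ite (s₁ ∪ s₂) (s₁' ∪ s₂') = t.ite s₁ s₁' ∪ t.ite s₂ s₂' := by
  ext x; by_cases hx : x ∈ t <;> simp [mem_ite_of_mem, mem_ite_of_notMem, hx]

theorem ite_sdiff_sdiff (t s₁ s₂ s₁' s₂' : Set α) :
    t.ite (s₁ \ s₂) (s₁' \ s₂') = t.ite s₁ s₁' \ t.ite s₂ s₂' := by
  ext x; by_cases hx : x ∈ t <;> simp [mem_ite_of_mem, mem_ite_of_notMem, hx]

theorem ite_union_singleton (ha : a ∈ t) : t.ite (s ∪ {a}) s' = t.ite s s' ∪ {a} := by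
  ext x; by_cases hx : x ∈ t
  · simp [mem_ite_of_mem, hx]
  · simp [mem_ite_of_notMem, hx, (ne_of_mem_of_not_mem ha hx).symm]

theorem ite_sdiff_singleton (ha : a ∈ t) : t.ite (s \ {a}) s' = t.ite s s' \ {a} := by
  ext x; by_cases hx : x ∈ t
  · simp [mem_ite_of_mem, hx]
  · simp [mem_ite_of_notMem, hx, (ne_of_mem_of_not_mem ha hx).symm]

theorem eq_ite_of_inter_eq (h : s ∩ t = s₁ ∩ t) (h' : s ∩ tᶜ = s₂ ∩ tᶜ) :
    s = t.ite s₁ s₂ := by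
  rw [Set.ite, sdiff_eq, ← h, ← h', inter_union_compl]

theorem ite_ite_same (t s₁ s₂ s : Set α) : t.ite (t.ite s₁ s₂) s = t.ite s₁ s := by
  ext x; by_cases hx : x ∈ t <;> simp [mem_ite_of_mem, mem_ite_of_notMem, hx]

end Set

namespace Model

variable {P : Set PVar} {A B M : Model}

def patch (P : Set PVar) (A B : Model) : Model :=
  ⟨P.ite A.R B.R, P.ite A.W B.W, P.ite A.V B.V, Set.ite_mono P A.sub B.sub⟩

def idle (M : Model) : Model := ⟨∅, ∅, M.V, subset_rfl⟩

theorem interModel_patch (P : Set PVar) (A B : Model) :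
    interModel (A.patch P B) P = interModel A P := by
  ext1 <;> exact Set.ite_inter_self ..

theorem eq_patch_of_interModel_eq (hA : interModel M P = interModel A P)
    (hB : interModel M Pᶜ = interModel B Pᶜ) : M = A.patch P B := by
  ext1 <;> apply Set.eq_ite_of_inter_eq
  exacts [congrArg Model.R hA, congrArg Model.R hB, congrArg Model.W hA, congrArg Model.W hB,
    congrArg Model.V hA, congrArg Model.V hB]

theorem patch_eq_right (h : interModel A P = interModel B P) : A.patch P B = B :=
  (eq_patch_of_interModel_eq h.symm rfl).symm

theorem patch_self (P : Set PVar) (A : Model) : A.patch P A = A := patch_eq_right rfl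

theorem patch_patch_left (P : Set PVar) (A B C : Model) :
    (A.patch P B).patch P C = A.patch P C := by
  ext1 <;> exact Set.ite_ite_same ..

end Model

section Patch

variable {P : Set PVar} {A A' B C D M N : Model}

theorem RWdisjoint.patch (h : RWdisjoint A B) (h' : RWdisjoint C D) :
    RWdisjoint (A.patch P C) (B.patch P D) := by
  obtain ⟨hAB, hBA⟩ := h
  obtain ⟨hCD, hDC⟩ := h'
  simp only [RWdisjoint, Model.patch, ← Set.ite_inter_inter, hAB, hBA, hCD, hDC, Set.ite_same,
    and_self]

theorem SplitRel.patch (h : SplitRel M A B) (h' : SplitRel N C D) :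
    SplitRel (M.patch P N) (A.patch P C) (B.patch P D) := by
  obtain ⟨hd, hR, hW, hVA, hVB⟩ := h
  obtain ⟨hd', hR', hW', hVC, hVD⟩ := h'
  refine ⟨hd.patch hd', ?_, ?_, ?_, ?_⟩ <;>
    simp only [Model.patch, ← Set.ite_union_union] <;> congr 1

theorem MergeRel.patch (h : MergeRel M A B) (h' : MergeRel N C D) :
    MergeRel (M.patch P N) (A.patch P C) (B.patch P D) := by
  obtain ⟨hd, hR, hW, hV, hM⟩ := h
  obtain ⟨hd', hR', hW', hV', hM'⟩ := h'
  refine ⟨hd.patch hd', ?_, ?_, ?_, ?_⟩ <;>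
    simp only [Model.patch, ← Set.ite_union_union, ← Set.ite_inter_inter,
      ← Set.ite_sdiff_sdiff] <;> congr 1

theorem Indist.patch (h : Indist A B) (h' : Indist C D) :
    Indist (A.patch P C) (B.patch P D) := by
  obtain ⟨hR, hW, hV⟩ := h
  obtain ⟨hR', hW', hV'⟩ := h'
  refine ⟨?_, ?_, ?_⟩ <;> simp only [Model.patch, ← Set.ite_inter_inter] <;> congr 1

def SameFrame (M M' : Model) : Prop :=
  M.R = M'.R ∧ M.W = M'.W ∧ M.V \ M.W = M'.V \ M'.W

theorem SameFrame.patch (h : SameFrame A A') (C : Model) :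
    SameFrame (A.patch P C) (A'.patch P C) := by
  obtain ⟨hR, hW, hV⟩ := h
  refine ⟨?_, ?_, ?_⟩ <;> simp only [Model.patch, ← Set.ite_sdiff_sdiff] <;> congr 1

theorem splitRel_idle (M : Model) : SplitRel M M M.idle := by
  simp [SplitRel, RWdisjoint, Model.idle]

theorem mergeRel_idle (M : Model) : MergeRel M M M.idle := by
  simp [MergeRel, RWdisjoint, Model.idle, Set.union_eq_right.2 Set.inter_subset_left]

end Patch

open Model in
mutual

theorem Sat.of_interModel_eq {P : Set PVar} {φ : Formula} (hφ : ↑(varsF φ) ⊆ P)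
    {M M' : Model} (hM : interModel M P = interModel M' P) (h : Sat M φ) : Sat M' φ := by
  match φ with
  | .atom p =>
    have hp : p ∈ P := hφ (by simp [varsF])
    exact ((Set.ext_iff.1 (congrArg Model.V hM) p).1 ⟨h, hp⟩).1
  | .top => trivial
  | .neg ψ => exact fun h' => h (Sat.of_interModel_eq (φ := ψ) hφ hM.symm h')
  | .or ψ χ =>
    simp only [varsF, Finset.coe_union, Set.union_subset_iff] at hφ
    exact h.imp (Sat.of_interModel_eq hφ.1 hM) (Sat.of_interModel_eq hφ.2 hM)
  | .dia π ψ =>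
    simp only [varsF, Finset.coe_union, Set.union_subset_iff] at hφ
    obtain ⟨N, hMN, hN⟩ := h
    refine ⟨N.patch P M', ?_, Sat.of_interModel_eq hφ.2 (interModel_patch P N M').symm hN⟩
    simpa only [patch_eq_right hM] using hMN.patch hφ.1 M'

theorem Interp.patch {P : Set PVar} {π : Program} (hπ : ↑(varsP π) ⊆ P) {M N : Model}
    (h : Interp π M N) (C : Model) : Interp π (M.patch P C) (N.patch P C) := by
  match π with
  | .assignT p | .assignF p =>
    have hp : p ∈ P := hπ (by simp [varsP])
    obtain ⟨hR, hW, hV, hw⟩ := h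
    simp only [Interp, Model.patch, hR, hW, hV, Set.ite_union_singleton hp,
      Set.ite_sdiff_singleton hp, Set.mem_ite_of_mem hp, hw, and_self]
  | .addR p | .remR p | .addW p | .remW p =>
    have hp : p ∈ P := hπ (by simp [varsP])
    obtain ⟨hR, hW, hV⟩ := h
    simp only [Interp, Model.patch, hR, hW, hV, Set.ite_union_singleton hp,
      Set.ite_sdiff_singleton hp, and_self]
  | .testEx ψ =>
    obtain ⟨rfl, hM⟩ := h
    exact ⟨rfl, Sat.of_interModel_eq hπ (interModel_patch P M C).symm hM⟩
  | .testEn ψ =>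
    obtain ⟨rfl, hM⟩ := h
    refine ⟨rfl, fun K hK => ?_⟩
    have hKM : Indist (K.patch P M) M := by
      simpa only [patch_patch_left, patch_self] using
        hK.patch (P := P) (⟨rfl, rfl, rfl⟩ : Indist M M)
    exact Sat.of_interModel_eq hπ (interModel_patch P K M) (hM _ hKM)
  | .seq π₁ π₂ =>
    simp only [varsP, Finset.coe_union, Set.union_subset_iff] at hπ
    obtain ⟨K, h₁, h₂⟩ := h
    exact ⟨K.patch P C, h₁.patch hπ.1 C, h₂.patch hπ.2 C⟩
  | .choice π₁ π₂ =>
    simp only [varsP, Finset.coe_union, Set.union_subset_iff] at hπ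
    exact h.imp (·.patch hπ.1 C) (·.patch hπ.2 C)
  | .star π₁ =>
    exact h.lift (fun X : Model => X.patch P C) fun _ _ h => Interp.patch (π := π₁) hπ h C
  | .par π₁ π₂ =>
    simp only [varsP, Finset.coe_union, Set.union_subset_iff] at hπ
    obtain ⟨A, B, A', B', hs, hm, hA, hB, aR, aW, aV, bR, bW, bV⟩ := h
    obtain ⟨aR', aW', aV'⟩ := SameFrame.patch (P := P) ⟨aR, aW, aV⟩ C
    obtain ⟨bR', bW', bV'⟩ := SameFrame.patch (P := P) ⟨bR, bW, bV⟩ C.idle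
    exact ⟨A.patch P C, B.patch P C.idle, A'.patch P C, B'.patch P C.idle,
      hs.patch (splitRel_idle C), hm.patch (mergeRel_idle C), hA.patch hπ.1 C,
      hB.patch hπ.2 C.idle, aR', aW', aV', bR', bW', bV'⟩

end

/-- Irrelevance of variables, program part (Lemma 1(2)): if
`vars(π) ⊆ P`, `M₁ ∩ P = M₁' ∩ P` and `M₁⟦π⟧M₂`, then `M₁'⟦π⟧M₂'` for the
(unique) model `M₂'` with `M₂' ∩ P = M₂ ∩ P` and `M₂' ∩ (ℙ∖P) = M₁' ∩ (ℙ∖P)`. -/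
theorem irrelevant_variables_program (π : Program) (P : Set PVar)
    (hP : ↑(varsP π) ⊆ P) (M1 M1' M2 : Model)
    (h : interModel M1 P = interModel M1' P)
    (hexec : Interp π M1 M2) :
    ∀ M2' : Model, interModel M2' P = interModel M2 P →
      interModel M2' Pᶜ = interModel M1' Pᶜ → Interp π M1' M2' := by
  intro M2' h2P h2C
  have := hexec.patch hP M1'
  rwa [Model.patch_eq_right h, ← Model.eq_patch_of_interModel_eq h2P h2C] at this
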